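/- arXiv:1907.01135 — 2 statements merged into one kernel-verified Lean document; each statement's English description precedes it below -/
import Mathlib

section
/- In the rank-two lattice setting: let T be a strongly exceptional subset of L, α : L → ℝ ℤ-linear with α(E_i) > 0 for i in I_+ and α(E_i) < 0 for i in I_-, and D_0 in T maximizing α on T. Then for every D_k in T with D_k ≠ D_0, the difference D_k - (D_0 - E_+) is not an ExtP-class, where E_+ = sum_{i in I_+} E_i. -/
section RankTwo

variable {L : Type*} [AddCommGroup L] {m : ℕ}

/-- All coefficients `≤ -1`. -/
def IsNegAll (E : Fin m → L) (D : L) : Prop :=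
  ∃ a : Fin m → ℤ, (∀ i, a i ≤ -1) ∧ D = ∑ i, a i • E i

/-- Coefficients `≤ -1` on `Iminus` and `≥ 0` on `Iplus`. -/
def IsExtP (E : Fin m → L) (Iplus Iminus : Finset (Fin m)) (D : L) : Prop :=
  ∃ a : Fin m → ℤ, (∀ i ∈ Iminus, a i ≤ -1) ∧ (∀ i ∈ Iplus, 0 ≤ a i) ∧
    D = ∑ i, a i • E i

/-- Coefficients `≤ -1` on `Iplus` and `≥ 0` on `Iminus`. -/
def IsExtM (E : Fin m → L) (Iplus Iminus : Finset (Fin m)) (D : L) : Prop :=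
  ∃ a : Fin m → ℤ, (∀ i ∈ Iplus, a i ≤ -1) ∧ (∀ i ∈ Iminus, 0 ≤ a i) ∧
    D = ∑ i, a i • E i

/-- No difference of two *distinct* elements of `T` is a NegAll-, ExtP- or ExtM-class. -/
def StronglyExc (E : Fin m → L) (Iplus Iminus : Finset (Fin m)) (T : Set L) : Prop :=
  ∀ D ∈ T, ∀ D' ∈ T, D ≠ D' →
    ¬ IsNegAll E (D' - D) ∧ ¬ IsExtP E Iplus Iminus (D' - D) ∧
    ¬ IsExtM E Iplus Iminus (D' - D)

end RankTwo

theorem stmt_12 {L : Type*} [AddCommGroup L] [Module.Free ℤ L] {m : ℕ}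
    (E : Fin m → L) (Iplus Iminus : Finset (Fin m))
    (hdisj : Disjoint Iplus Iminus) (hunion : Iplus ∪ Iminus = Finset.univ)
    (hpne : Iplus.Nonempty) (hmne : Iminus.Nonempty)
    (T : Set L) (hT : StronglyExc E Iplus Iminus T)
    (α : L →+ ℝ)
    (hαp : ∀ i ∈ Iplus, 0 < α (E i)) (hαm : ∀ i ∈ Iminus, α (E i) < 0)
    (hzero : α (∑ i ∈ Iplus, E i) + α (∑ i ∈ Iminus, E i) = 0)
    (D₀ : L) (hD₀ : D₀ ∈ T) (hmax : ∀ D ∈ T, α D ≤ α D₀) :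
    ∀ Dk ∈ T, Dk ≠ D₀ →
      ¬ IsExtP E Iplus Iminus (Dk - (D₀ - ∑ i ∈ Iplus, E i)) := by
  rintro Dk hDk hne ⟨a, hm, hp, heq⟩
  have hsplitL : ∀ (f : Fin m → L), ∑ i, f i = ∑ i ∈ Iplus, f i + ∑ i ∈ Iminus, f i := by
    intro f
    rw [← Finset.sum_union hdisj, hunion]
  have heq0 : Dk - D₀ = ∑ i, a i • E i - ∑ i ∈ Iplus, E i := by
    rw [← heq]; abel
  have heq' : Dk - D₀ =
      ∑ i ∈ Iplus, a i • E i + ∑ i ∈ Iminus, a i • E i - ∑ i ∈ Iplus, E i := by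
    rw [heq0, hsplitL (fun i => a i • E i)]
  by_cases h0 : ∀ i ∈ Iplus, a i = 0
  · refine (hT D₀ hD₀ Dk hDk (Ne.symm hne)).1 ?_
    refine ⟨fun i => if i ∈ Iplus then -1 else a i, ?_, ?_⟩
    · intro i
      by_cases hi : i ∈ Iplus
      · simp [hi]
      · have hiu : i ∈ Iplus ∪ Iminus := by rw [hunion]; exact Finset.mem_univ i
        have hi' : i ∈ Iminus := by
          rcases Finset.mem_union.mp hiu with h | h
          · exact absurd h hi
          · exact h
        simpa [hi] using hm i hi'
    · rw [hsplitL (fun i => (if i ∈ Iplus then (-1 : ℤ) else a i) • E i)]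
      have h1 : ∑ i ∈ Iplus, a i • E i = 0 :=
        Finset.sum_eq_zero fun i hi => by rw [h0 i hi]; simp
      have h2 : ∑ i ∈ Iplus, (if i ∈ Iplus then (-1 : ℤ) else a i) • E i
          = - ∑ i ∈ Iplus, E i := by
        rw [← Finset.sum_neg_distrib]
        exact Finset.sum_congr rfl fun i hi => by simp [hi]
      have h3 : ∑ i ∈ Iminus, (if i ∈ Iplus then (-1 : ℤ) else a i) • E i
          = ∑ i ∈ Iminus, a i • E i := by
        refine Finset.sum_congr rfl fun i hi => ?_
        have hnp : i ∉ Iplus := fun h => (Finset.disjoint_left.mp hdisj h) hi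
        simp [hnp]
      rw [h2, h3, heq', h1]
      abel
  · push_neg at h0
    obtain ⟨i₀, hi₀, hai₀⟩ := h0
    have hai₀' : 1 ≤ a i₀ := lt_of_le_of_ne (hp i₀ hi₀) (Ne.symm hai₀)
    have hEm : ∑ i ∈ Iplus, α (E i) = - ∑ i ∈ Iminus, α (E i) := by
      simp only [map_sum] at hzero
      linarith
    have hα : α Dk - α D₀ = ∑ i ∈ Iplus, (a i : ℝ) * α (E i)
        + ∑ i ∈ Iminus, ((a i : ℝ) + 1) * α (E i) := by
      have h := congrArg α heq'
      simp only [map_sub, map_add, map_sum, map_zsmul, zsmul_eq_mul] at h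
      rw [h, hEm, sub_neg_eq_add, add_assoc, ← Finset.sum_add_distrib]
      congr 1
      exact Finset.sum_congr rfl fun i _ => by ring
    have h1 : 0 < ∑ i ∈ Iplus, (a i : ℝ) * α (E i) := by
      refine Finset.sum_pos' (fun i hi => mul_nonneg ?_ (hαp i hi).le)
        ⟨i₀, hi₀, mul_pos ?_ (hαp i₀ hi₀)⟩
      · exact_mod_cast hp i hi
      · exact_mod_cast lt_of_lt_of_le zero_lt_one hai₀'
    have h2 : 0 ≤ ∑ i ∈ Iminus, ((a i : ℝ) + 1) * α (E i) := by
      refine Finset.sum_nonneg fun i hi => ?_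
      have h1 : (a i : ℝ) ≤ -1 := by exact_mod_cast hm i hi
      nlinarith [hαm i hi]
    have := hmax Dk hDk
    linarith
end

section
/- In the rank-two lattice setting with α(E_+) + α(E_-) = 0: let T be a strongly exceptional subset of L and D_0 in T maximizing α on T. Then for every D_k in T with D_k ≠ D_0, the difference (D_0 - E_+) - D_k is not an ExtM-class. -/
theorem stmt_13 {L : Type*} [AddCommGroup L] [Module.Free ℤ L] {m : ℕ}
    (E : Fin m → L) (Iplus Iminus : Finset (Fin m))
    (hdisj : Disjoint Iplus Iminus) (hunion : Iplus ∪ Iminus = Finset.univ)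
    (hpne : Iplus.Nonempty) (hmne : Iminus.Nonempty)
    (T : Set L) (hT : StronglyExc E Iplus Iminus T)
    (α : L →+ ℝ)
    (hαp : ∀ i ∈ Iplus, 0 < α (E i)) (hαm : ∀ i ∈ Iminus, α (E i) < 0)
    (hzero : α (∑ i ∈ Iplus, E i) + α (∑ i ∈ Iminus, E i) = 0)
    (D₀ : L) (hD₀ : D₀ ∈ T) (hmax : ∀ D ∈ T, α D ≤ α D₀) :
    ∀ Dk ∈ T, Dk ≠ D₀ →
      ¬ IsExtM E Iplus Iminus ((D₀ - ∑ i ∈ Iplus, E i) - Dk) := by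

  rintro Dk hDk hne ⟨a, ha1, ha2, heq⟩
  set b : Fin m → ℤ := fun i => a i + (if i ∈ Iplus then 1 else 0) with hb
  have hsum : D₀ - Dk = ∑ i, b i • E i := by
    have h1 : ∑ i ∈ Iplus, E i = ∑ i, (if i ∈ Iplus then (1:ℤ) else 0) • E i := by
      simp only [ite_smul, one_smul, zero_smul]
      rw [← Finset.sum_filter]
      simp [Finset.filter_mem_eq_inter]
    have : D₀ - Dk = ((D₀ - ∑ i ∈ Iplus, E i) - Dk) + ∑ i ∈ Iplus, E i := by abel
    rw [this, heq, h1, ← Finset.sum_add_distrib]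
    exact Finset.sum_congr rfl (fun i _ => by rw [hb]; push_cast; rw [add_smul])
  have hα : α (D₀ - Dk) = ∑ i, (b i : ℝ) * α (E i) := by
    rw [hsum, map_sum]
    exact Finset.sum_congr rfl (fun i _ => by rw [map_zsmul, zsmul_eq_mul])
  have hterm : ∀ i ∈ Finset.univ, (b i : ℝ) * α (E i) ≤ 0 := by
    intro i _
    have : i ∈ Iplus ∪ Iminus := by rw [hunion]; exact Finset.mem_univ i
    rcases Finset.mem_union.1 this with hi | hi
    · have hbi : b i ≤ 0 := by
        have := ha1 i hi
        simp only [hb, if_pos hi]; omega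
      exact mul_nonpos_of_nonpos_of_nonneg (by exact_mod_cast hbi) (hαp i hi).le
    · have hi' : i ∉ Iplus := fun h => (hdisj.forall_ne_finset h hi) rfl
      have hbi : 0 ≤ b i := by
        have := ha2 i hi
        simp only [hb, if_neg hi']; omega
      exact mul_nonpos_of_nonneg_of_nonpos (by exact_mod_cast hbi) (hαm i hi).le
  have hnn : 0 ≤ α (D₀ - Dk) := by
    rw [map_sub]
    linarith [hmax Dk hDk]
  have hz : ∀ i ∈ Finset.univ, (b i : ℝ) * α (E i) = 0 := by
    apply (Finset.sum_eq_zero_iff_of_nonpos hterm).1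
    have := Finset.sum_nonpos hterm
    rw [← hα] at this ⊢
    linarith
  have hb0 : ∀ i, b i = 0 := by
    intro i
    have := hz i (Finset.mem_univ i)
    rcases mul_eq_zero.1 this with h | h
    · exact_mod_cast h
    · exfalso
      have : i ∈ Iplus ∪ Iminus := by rw [hunion]; exact Finset.mem_univ i
      rcases Finset.mem_union.1 this with hi | hi
      · exact absurd h (hαp i hi).ne'
      · exact absurd h (hαm i hi).ne
  apply hne
  have : D₀ - Dk = 0 := by
    rw [hsum]
    exact Finset.sum_eq_zero (fun i _ => by rw [hb0 i, zero_smul])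
  have := sub_eq_zero.1 this
  exact this.symm
end
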